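/- Let (μ,σ) be an SDE on an open set M ⊆ ℝⁿ and let V₁ = (Y₁,C₁,τ₁,H₁) and V₂ = (Y₂,C₂,τ₂,H₂) be infinitesimal symmetries of (μ,σ) (i.e. satisfying the determining equations) of quasi Doob type, meaning H_i = σᵀ·∇k_i for smooth functions k₁, k₂: M → ℝ. Then the fourth component of the bracket [V₁,V₂], namely H = Y₁(H₂) − Y₂(H₁) − (−τ₁/2 + C₁)·H₂ + (−τ₂/2 + C₂)·H₁, satisfies H = σᵀ·∇( Y₁(k₂) − Y₂(k₁) ). In particular the bracket of two quasi Doob symmetries is a quasi Doob symmetry. -/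

import Mathlib

/-!
Writing `H = σᵀ∇k`, the Leibniz rule and the symmetry of the Hessian of `k` give
`Y(σᵀ∇k) = [Y,σ]ᵀ∇k + σᵀ∇(Y k)`. The second determining equation
`[Y,σ] = -(τ/2)σ - σC` and the antisymmetry of `C` turn `[Y,σ]ᵀ∇k` into `(-τ/2 + C)·σᵀ∇k`, so
`Y(H) - (-τ/2 + C)·H = σᵀ∇(Y k)` for a quasi Doob symmetry; the `H`-component of the bracket is the
difference of two such expressions.
-/

open Matrix

/-- Partial derivative `∂ᵢ f` of a scalar function on `ℝⁿ`. -/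
noncomputable def pd {n : ℕ} (i : Fin n) (f : (Fin n → ℝ) → ℝ) (x : Fin n → ℝ) : ℝ :=
  fderiv ℝ f x (Pi.single i 1)

/-- Action `Y(f) = Yⁱ ∂ᵢ f` of a vector field on a scalar function. -/
noncomputable def vfd {n : ℕ} (Y : (Fin n → ℝ) → Fin n → ℝ)
    (f : (Fin n → ℝ) → ℝ) (x : Fin n → ℝ) : ℝ :=
  ∑ j, Y x j * pd j f x

/-- Infinitesimal generator `L(f) = ½ (σσᵀ)^{ij} ∂ᵢ∂ⱼ f + μⁱ ∂ᵢ f` of the SDE `(μ,σ)`. -/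
noncomputable def gen {n m : ℕ} (μ : (Fin n → ℝ) → Fin n → ℝ)
    (σ : (Fin n → ℝ) → Matrix (Fin n) (Fin m) ℝ)
    (f : (Fin n → ℝ) → ℝ) (x : Fin n → ℝ) : ℝ :=
  (1 / 2) * ∑ i, ∑ j, (∑ α, σ x i α * σ x j α) * pd i (pd j f) x
    + ∑ i, μ x i * pd i f x

/-- Entrywise smoothness of a vector-valued function on a set. -/
def SmoothVec {n k : ℕ} (M : Set (Fin n → ℝ)) (f : (Fin n → ℝ) → Fin k → ℝ) : Prop :=
  ∀ i, ContDiffOn ℝ (⊤ : ℕ∞) (fun x => f x i) M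

/-- Entrywise smoothness of a matrix-valued function on a set. -/
def SmoothMat {n k l : ℕ} (M : Set (Fin n → ℝ))
    (f : (Fin n → ℝ) → Matrix (Fin k) (Fin l) ℝ) : Prop :=
  ∀ i j, ContDiffOn ℝ (⊤ : ℕ∞) (fun x => f x i j) M

/-- The determining equations: `V = (Y,C,τ,H)` is an infinitesimal symmetry of the SDE
`(μ,σ)` on `M`, i.e. `Y(μ) − L(Y) − σ·H + τμ = 0` and `[Y,σ] + ½τσ + σ·C = 0` on `M`. -/
def DetEqs {n m : ℕ} (M : Set (Fin n → ℝ))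
    (μ : (Fin n → ℝ) → Fin n → ℝ) (σ : (Fin n → ℝ) → Matrix (Fin n) (Fin m) ℝ)
    (Y : (Fin n → ℝ) → Fin n → ℝ) (C : (Fin n → ℝ) → Matrix (Fin m) (Fin m) ℝ)
    (τ : (Fin n → ℝ) → ℝ) (H : (Fin n → ℝ) → Fin m → ℝ) : Prop :=
  (∀ x ∈ M, ∀ i, vfd Y (fun y => μ y i) x - gen μ σ (fun y => Y y i) x
      - (∑ α, σ x i α * H x α) + τ x * μ x i = 0) ∧
  (∀ x ∈ M, ∀ i, ∀ α, vfd Y (fun y => σ y i α) x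
      - (∑ j, σ x j α * pd j (fun y => Y y i) x)
      + (1 / 2) * τ x * σ x i α + (∑ β, σ x i β * C x β α) = 0)

/-- First component (`Y`-part) of the bracket of two infinitesimal stochastic
transformations: `[Y₁,Y₂]`. -/
noncomputable def brY {n : ℕ} (Y₁ Y₂ : (Fin n → ℝ) → Fin n → ℝ) (x : Fin n → ℝ) :
    Fin n → ℝ := fun i =>
  vfd Y₁ (fun y => Y₂ y i) x - vfd Y₂ (fun y => Y₁ y i) x

/-- Second component (`C`-part) of the bracket: `Y₁(C₂) − Y₂(C₁) − (C₁C₂ − C₂C₁)`. -/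
noncomputable def brC {n m : ℕ} (Y₁ Y₂ : (Fin n → ℝ) → Fin n → ℝ)
    (C₁ C₂ : (Fin n → ℝ) → Matrix (Fin m) (Fin m) ℝ) (x : Fin n → ℝ) :
    Matrix (Fin m) (Fin m) ℝ :=
  Matrix.of fun a b =>
    vfd Y₁ (fun y => C₂ y a b) x - vfd Y₂ (fun y => C₁ y a b) x
      - ((C₁ x * C₂ x) a b - (C₂ x * C₁ x) a b)

/-- Third component (`τ`-part) of the bracket: `Y₁(τ₂) − Y₂(τ₁)`. -/
noncomputable def brTau {n : ℕ} (Y₁ Y₂ : (Fin n → ℝ) → Fin n → ℝ)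
    (τ₁ τ₂ : (Fin n → ℝ) → ℝ) (x : Fin n → ℝ) : ℝ :=
  vfd Y₁ τ₂ x - vfd Y₂ τ₁ x

/-- Fourth component (`H`-part) of the bracket:
`Y₁(H₂) − Y₂(H₁) − (−τ₁/2 + C₁)·H₂ + (−τ₂/2 + C₂)·H₁`. -/
noncomputable def brH {n m : ℕ} (Y₁ Y₂ : (Fin n → ℝ) → Fin n → ℝ)
    (C₁ C₂ : (Fin n → ℝ) → Matrix (Fin m) (Fin m) ℝ)
    (τ₁ τ₂ : (Fin n → ℝ) → ℝ)
    (H₁ H₂ : (Fin n → ℝ) → Fin m → ℝ) (x : Fin n → ℝ) : Fin m → ℝ := fun a =>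
  vfd Y₁ (fun y => H₂ y a) x - vfd Y₂ (fun y => H₁ y a) x
    - ((-(τ₁ x) / 2) * H₂ x a + ∑ b, C₁ x a b * H₂ x b)
    + ((-(τ₂ x) / 2) * H₁ x a + ∑ b, C₂ x a b * H₁ x b)

noncomputable def grad {n : ℕ} (k : (Fin n → ℝ) → ℝ) (x : Fin n → ℝ) : Fin n → ℝ :=
  fun p => pd p k x

/-- `[Y,σ]`, the Lie bracket of `Y` with each column of `σ`. -/
noncomputable def lieBracketCols {n m : ℕ} (Y : (Fin n → ℝ) → Fin n → ℝ)
    (σ : (Fin n → ℝ) → Matrix (Fin n) (Fin m) ℝ) (x : Fin n → ℝ) :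
    Matrix (Fin n) (Fin m) ℝ :=
  Matrix.of fun i α => vfd Y (fun y => σ y i α) x - ∑ j, σ x j α * pd j (fun y => Y y i) x

section Calculus

variable {n : ℕ} {x : Fin n → ℝ}

theorem vfd_eq_fderiv (Y : (Fin n → ℝ) → Fin n → ℝ) (f : (Fin n → ℝ) → ℝ) :
    vfd Y f x = fderiv ℝ f x (Y x) := by
  conv_rhs => rw [← Finset.univ_sum_single (Y x)]
  simp only [map_sum, vfd, pd]
  refine Finset.sum_congr rfl fun j _ => ?_
  rw [← smul_eq_mul, ← map_smul, ← Pi.single_smul', smul_eq_mul, mul_one]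

theorem vfd_mul (Y : (Fin n → ℝ) → Fin n → ℝ) {f g : (Fin n → ℝ) → ℝ}
    (hf : DifferentiableAt ℝ f x) (hg : DifferentiableAt ℝ g x) :
    vfd Y (fun y => f y * g y) x = vfd Y f x * g x + f x * vfd Y g x := by
  simp only [vfd_eq_fderiv, fderiv_fun_mul hf hg, _root_.add_apply, _root_.smul_apply,
    smul_eq_mul]
  ring

theorem vfd_sum (Y : (Fin n → ℝ) → Fin n → ℝ) {ι : Type*} (s : Finset ι)
    {A : ι → (Fin n → ℝ) → ℝ} (h : ∀ i ∈ s, DifferentiableAt ℝ (A i) x) :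
    vfd Y (fun y => ∑ i ∈ s, A i y) x = ∑ i ∈ s, vfd Y (A i) x := by
  simp only [vfd_eq_fderiv, fderiv_fun_sum h, _root_.sum_apply]

theorem grad_sub {f g : (Fin n → ℝ) → ℝ} (hf : DifferentiableAt ℝ f x)
    (hg : DifferentiableAt ℝ g x) :
    grad (fun y => f y - g y) x = grad f x - grad g x := by
  ext p
  simp [grad, pd, fderiv_fun_sub hf hg]

theorem differentiableAt_pd {f : (Fin n → ℝ) → ℝ} (hf : ContDiffAt ℝ 2 f x) (p : Fin n) :
    DifferentiableAt ℝ (pd p f) x :=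
  ((hf.fderiv_right one_add_one_eq_two.le).differentiableAt one_ne_zero).clm_apply
    (differentiableAt_const _)

theorem pd_pd_comm {f : (Fin n → ℝ) → ℝ} (hf : ContDiffAt ℝ 2 f x) (i j : Fin n) :
    pd i (pd j f) x = pd j (pd i f) x := by
  have hsymm := hf.isSymmSndFDerivAt (by simp [minSmoothness_of_isRCLikeNormedField])
  have hd : DifferentiableAt ℝ (fderiv ℝ f) x :=
    (hf.fderiv_right one_add_one_eq_two.le).differentiableAt one_ne_zero
  unfold pd
  rw [fderiv_clm_apply hd (differentiableAt_const _),
    fderiv_clm_apply hd (differentiableAt_const _)]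
  simp [hsymm.eq]

theorem differentiableAt_vfd {Y : (Fin n → ℝ) → Fin n → ℝ}
    (hY : ∀ j, DifferentiableAt ℝ (fun y => Y y j) x) {f : (Fin n → ℝ) → ℝ}
    (hf : ContDiffAt ℝ 2 f x) : DifferentiableAt ℝ (vfd Y f) x :=
  DifferentiableAt.fun_sum fun j _ => (hY j).fun_mul (differentiableAt_pd hf j)

theorem pd_vfd {Y : (Fin n → ℝ) → Fin n → ℝ}
    (hY : ∀ j, DifferentiableAt ℝ (fun y => Y y j) x) {f : (Fin n → ℝ) → ℝ}
    (hf : ContDiffAt ℝ 2 f x) (p : Fin n) :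
    pd p (vfd Y f) x = ∑ j, pd p (fun y => Y y j) x * pd j f x + vfd Y (pd p f) x := by
  have hsum : pd p (vfd Y f) x = ∑ j, (pd p (fun y => Y y j) x * pd j f x
      + Y x j * pd p (pd j f) x) := by
    rw [show vfd Y f = fun y => ∑ j, Y y j * pd j f y from rfl, pd,
      fderiv_fun_sum fun j _ => (hY j).fun_mul (differentiableAt_pd hf j),
      _root_.sum_apply]
    refine Finset.sum_congr rfl fun j _ => ?_
    rw [fderiv_fun_mul (hY j) (differentiableAt_pd hf j)]
    simp only [_root_.add_apply, _root_.smul_apply, smul_eq_mul, pd]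
    ring
  rw [hsum, Finset.sum_add_distrib, vfd]
  congr 1
  exact Finset.sum_congr rfl fun j _ => by rw [pd_pd_comm hf]

end Calculus

theorem Matrix.transpose_eq_of_add_smul_add_mul_eq_zero {ι κ R : Type*} [Fintype κ]
    [CommRing R] {B σ : Matrix ι κ R} {C : Matrix κ κ R} {c : R}
    (h : B + c • σ + σ * C = 0) (hC : Cᵀ = -C) : Bᵀ = -c • σᵀ + C * σᵀ := by
  have hB : B = -c • σ - σ * C := by
    rw [← sub_eq_zero, ← h]
    simp only [neg_smul]
    abel
  rw [hB, transpose_sub, transpose_smul, transpose_mul, hC, Matrix.neg_mul, sub_neg_eq_add]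

section QuasiDoob

variable {n m : ℕ} {x : Fin n → ℝ} {σ : (Fin n → ℝ) → Matrix (Fin n) (Fin m) ℝ}
  {Y : (Fin n → ℝ) → Fin n → ℝ} {k : (Fin n → ℝ) → ℝ}

theorem vfd_transpose_mulVec_grad
    (hσ : ∀ p α, DifferentiableAt ℝ (fun y => σ y p α) x)
    (hY : ∀ j, DifferentiableAt ℝ (fun y => Y y j) x) (hk : ContDiffAt ℝ 2 k x) (α : Fin m) :
    vfd Y (fun y => ((σ y)ᵀ *ᵥ grad k y) α) x
      = ((lieBracketCols Y σ x)ᵀ *ᵥ grad k x) α + ((σ x)ᵀ *ᵥ grad (vfd Y k) x) α := by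
  change vfd Y (fun y => ∑ p, σ y p α * pd p k y) x = _
  rw [vfd_sum _ _ fun p _ => (hσ p α).fun_mul (differentiableAt_pd hk p)]
  simp only [vfd_mul Y (hσ _ α) (differentiableAt_pd hk _), mulVec, dotProduct,
    transpose_apply, lieBracketCols, of_apply, grad, pd_vfd hY hk]
  simp only [sub_mul, mul_add, Finset.sum_add_distrib, Finset.sum_sub_distrib, Finset.sum_mul,
    Finset.mul_sum]
  rw [Finset.sum_comm (f := fun p j => σ x j α * pd j (fun y => Y y p) x * pd p k x)]
  ring_nf

theorem vfd_transpose_mulVec_grad_sub {t : ℝ} {C : Matrix (Fin m) (Fin m) ℝ}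
    (hσ : ∀ p α, DifferentiableAt ℝ (fun y => σ y p α) x)
    (hY : ∀ j, DifferentiableAt ℝ (fun y => Y y j) x) (hk : ContDiffAt ℝ 2 k x)
    (hbr : lieBracketCols Y σ x + t • σ x + σ x * C = 0) (hC : Cᵀ = -C) (α : Fin m) :
    vfd Y (fun y => ((σ y)ᵀ *ᵥ grad k y) α) x
        - (-t • ((σ x)ᵀ *ᵥ grad k x) + C *ᵥ ((σ x)ᵀ *ᵥ grad k x)) α
      = ((σ x)ᵀ *ᵥ grad (vfd Y k) x) α := by
  rw [vfd_transpose_mulVec_grad hσ hY hk, transpose_eq_of_add_smul_add_mul_eq_zero hbr hC,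
    add_mulVec, smul_mulVec, mulVec_mulVec]
  ring

end QuasiDoob

theorem DetEqs.lieBracketCols_add_eq_zero {n m : ℕ} {M : Set (Fin n → ℝ)}
    {μ : (Fin n → ℝ) → Fin n → ℝ} {σ : (Fin n → ℝ) → Matrix (Fin n) (Fin m) ℝ}
    {Y : (Fin n → ℝ) → Fin n → ℝ} {C : (Fin n → ℝ) → Matrix (Fin m) (Fin m) ℝ}
    {τ : (Fin n → ℝ) → ℝ} {H : (Fin n → ℝ) → Fin m → ℝ} (h : DetEqs M μ σ Y C τ H)
    {x : Fin n → ℝ} (hx : x ∈ M) :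
    lieBracketCols Y σ x + (1 / 2 * τ x) • σ x + σ x * C x = 0 := by
  ext i α
  simpa [lieBracketCols, Matrix.mul_apply, mul_assoc] using h.2 x hx i α

theorem SmoothVec.differentiableAt {n k : ℕ} {M : Set (Fin n → ℝ)}
    {f : (Fin n → ℝ) → Fin k → ℝ} (hf : SmoothVec M f) (hM : IsOpen M) {x : Fin n → ℝ}
    (hx : x ∈ M) (i : Fin k) : DifferentiableAt ℝ (fun y => f y i) x :=
  ((hf i).contDiffAt (hM.mem_nhds hx)).differentiableAt (by simp)

theorem SmoothMat.differentiableAt {n k l : ℕ} {M : Set (Fin n → ℝ)}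
    {f : (Fin n → ℝ) → Matrix (Fin k) (Fin l) ℝ} (hf : SmoothMat M f) (hM : IsOpen M)
    {x : Fin n → ℝ} (hx : x ∈ M) (i : Fin k) (j : Fin l) :
    DifferentiableAt ℝ (fun y => f y i j) x :=
  ((hf i j).contDiffAt (hM.mem_nhds hx)).differentiableAt (by simp)

theorem statement10_general {n m : ℕ} (M : Set (Fin n → ℝ)) (hM : IsOpen M)
    (μ : (Fin n → ℝ) → Fin n → ℝ) (σ : (Fin n → ℝ) → Matrix (Fin n) (Fin m) ℝ)
    (hσ : SmoothMat M σ)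
    (Y₁ Y₂ : (Fin n → ℝ) → Fin n → ℝ)
    (C₁ C₂ : (Fin n → ℝ) → Matrix (Fin m) (Fin m) ℝ)
    (τ₁ τ₂ : (Fin n → ℝ) → ℝ) (k₁ k₂ : (Fin n → ℝ) → ℝ)
    (hY₁ : SmoothVec M Y₁) (hY₂ : SmoothVec M Y₂)
    (hk₁ : ContDiffOn ℝ (⊤ : ℕ∞) k₁ M) (hk₂ : ContDiffOn ℝ (⊤ : ℕ∞) k₂ M)
    (hC₁ : ∀ x ∈ M, (C₁ x)ᵀ = -(C₁ x)) (hC₂ : ∀ x ∈ M, (C₂ x)ᵀ = -(C₂ x))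
    (hsym₁ : DetEqs M μ σ Y₁ C₁ τ₁ (fun x α => ∑ p, σ x p α * pd p k₁ x))
    (hsym₂ : DetEqs M μ σ Y₂ C₂ τ₂ (fun x α => ∑ p, σ x p α * pd p k₂ x)) :
    ∀ x ∈ M, ∀ α,
      brH Y₁ Y₂ C₁ C₂ τ₁ τ₂ (fun y β => ∑ p, σ y p β * pd p k₁ y)
          (fun y β => ∑ p, σ y p β * pd p k₂ y) x α =
        ∑ p, σ x p α * pd p (fun y => vfd Y₁ k₂ y - vfd Y₂ k₁ y) x := by
  intro x hx α
  have hk₁x : ContDiffAt ℝ 2 k₁ x := (hk₁.contDiffAt (hM.mem_nhds hx)).of_le (by norm_cast)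
  have hk₂x : ContDiffAt ℝ 2 k₂ x := (hk₂.contDiffAt (hM.mem_nhds hx)).of_le (by norm_cast)
  have hσx := hσ.differentiableAt hM hx
  have h₁ := vfd_transpose_mulVec_grad_sub hσx (hY₁.differentiableAt hM hx) hk₂x
    (hsym₁.lieBracketCols_add_eq_zero hx) (hC₁ x hx) α
  have h₂ := vfd_transpose_mulVec_grad_sub hσx (hY₂.differentiableAt hM hx) hk₁x
    (hsym₂.lieBracketCols_add_eq_zero hx) (hC₂ x hx) α
  change brH Y₁ Y₂ C₁ C₂ τ₁ τ₂ (fun y => (σ y)ᵀ *ᵥ grad k₁ y) (fun y => (σ y)ᵀ *ᵥ grad k₂ y)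
      x α = ((σ x)ᵀ *ᵥ grad (fun y => vfd Y₁ k₂ y - vfd Y₂ k₁ y) x) α
  rw [grad_sub (differentiableAt_vfd (hY₁.differentiableAt hM hx) hk₂x)
    (differentiableAt_vfd (hY₂.differentiableAt hM hx) hk₁x), mulVec_sub, Pi.sub_apply,
    ← h₁, ← h₂]
  simp only [brH, Pi.add_apply, Pi.smul_apply, smul_eq_mul, mulVec, dotProduct]
  ring

/-- The `H`-component of the bracket of two quasi Doob symmetries `V_i = (Y_i,C_i,τ_i,σᵀ∇k_i)`
of `(μ,σ)` equals `σᵀ·∇(Y₁(k₂) − Y₂(k₁))`; in particular the bracket of two quasi Doob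
symmetries is a quasi Doob symmetry. -/
theorem statement10 {n m : ℕ} (M : Set (Fin n → ℝ)) (hM : IsOpen M)
    (μ : (Fin n → ℝ) → Fin n → ℝ) (σ : (Fin n → ℝ) → Matrix (Fin n) (Fin m) ℝ)
    (hμ : SmoothVec M μ) (hσ : SmoothMat M σ)
    (Y₁ Y₂ : (Fin n → ℝ) → Fin n → ℝ)
    (C₁ C₂ : (Fin n → ℝ) → Matrix (Fin m) (Fin m) ℝ)
    (τ₁ τ₂ : (Fin n → ℝ) → ℝ) (k₁ k₂ : (Fin n → ℝ) → ℝ)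
    (hY₁ : SmoothVec M Y₁) (hY₂ : SmoothVec M Y₂)
    (hC₁s : SmoothMat M C₁) (hC₂s : SmoothMat M C₂)
    (hτ₁ : ContDiffOn ℝ (⊤ : ℕ∞) τ₁ M) (hτ₂ : ContDiffOn ℝ (⊤ : ℕ∞) τ₂ M)
    (hk₁ : ContDiffOn ℝ (⊤ : ℕ∞) k₁ M) (hk₂ : ContDiffOn ℝ (⊤ : ℕ∞) k₂ M)
    (hC₁ : ∀ x ∈ M, (C₁ x)ᵀ = -(C₁ x)) (hC₂ : ∀ x ∈ M, (C₂ x)ᵀ = -(C₂ x))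
    (hsym₁ : DetEqs M μ σ Y₁ C₁ τ₁ (fun x α => ∑ p, σ x p α * pd p k₁ x))
    (hsym₂ : DetEqs M μ σ Y₂ C₂ τ₂ (fun x α => ∑ p, σ x p α * pd p k₂ x)) :
    ∀ x ∈ M, ∀ α,
      brH Y₁ Y₂ C₁ C₂ τ₁ τ₂ (fun y β => ∑ p, σ y p β * pd p k₁ y)
          (fun y β => ∑ p, σ y p β * pd p k₂ y) x α =
        ∑ p, σ x p α * pd p (fun y => vfd Y₁ k₂ y - vfd Y₂ k₁ y) x :=
  statement10_general M hM μ σ hσ Y₁ Y₂ C₁ C₂ τ₁ τ₂ k₁ k₂ hY₁ hY₂ hk₁ hk₂ hC₁ hC₂ hsym₁ hsym₂
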